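/- arXiv:1903.10182 — 3 statements merged into one kernel-verified Lean document; each statement's English description precedes it below -/
import Mathlib

section
/- The set of finite dimensional tracial states on a unital C*-algebra A is a convex face of the tracial state space T(A): if τ₁, τ₂ ∈ T(A) and 0 < c < 1 are such that cτ₁ + (1−c)τ₂ is finite dimensional, then both τ₁ and τ₂ are finite dimensional; and conversely any convex combination of finite dimensional traces is finite dimensional. -/
/-!
For a positive functional `τ` the set `I_τ = {a | τ (a⋆ a) = 0}` is a subspace, by the
parallelogram identity. For `τ = c τ₁ + (1 - c) τ₂` with `0 < c < 1` a sum of nonnegative terms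
vanishes only if both do, so `I_τ = I_τ₁ ∩ I_τ₂`. Hence each `A ⧸ I_τᵢ` is a quotient of `A ⧸ I_τ`,
and conversely `A ⧸ I_τ` embeds into `A ⧸ I_τ₁ × A ⧸ I_τ₂`.
-/

open scoped ComplexOrder

/-- A tracial state on a unital complex `*`-algebra: a unital, positive, tracial
linear functional. -/
def IsTracialState {A : Type*} [Ring A] [StarRing A] [Algebra ℂ A]
    (τ : A →ₗ[ℂ] ℂ) : Prop :=
  τ 1 = 1 ∧ (∀ a, 0 ≤ τ (star a * a)) ∧ (∀ a b, τ (a * b) = τ (b * a))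

/-- A tracial state `τ` is finite dimensional if the quotient of `A` by the ideal
`I_τ = {a | τ (a⋆ a) = 0}` is finite dimensional. -/
def IsFiniteDimensionalTrace {A : Type*} [Ring A] [StarRing A] [Algebra ℂ A]
    (τ : A →ₗ[ℂ] ℂ) : Prop :=
  ∃ S : Submodule ℂ A, (∀ a, a ∈ S ↔ τ (star a * a) = 0) ∧ FiniteDimensional ℂ (A ⧸ S)

theorem Submodule.finite_quotient_inf {R M : Type*} [Ring R] [IsNoetherianRing R]
    [AddCommGroup M] [Module R M] (p q : Submodule R M) [Module.Finite R (M ⧸ p)]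
    [Module.Finite R (M ⧸ q)] : Module.Finite R (M ⧸ p ⊓ q) := by
  have hker : LinearMap.ker (p.mkQ.prod q.mkQ) = p ⊓ q := by
    rw [LinearMap.ker_prod, Submodule.ker_mkQ, Submodule.ker_mkQ]
  exact Module.Finite.of_injective ((p ⊓ q).liftQ (p.mkQ.prod q.mkQ) hker.ge)
    (LinearMap.ker_eq_bot.mp (Submodule.ker_liftQ_eq_bot _ _ _ hker.le))

section NullSpace

variable {A : Type*} [Ring A] [StarRing A] [Algebra ℂ A]

theorem add_mem_null_of_nonneg {τ : A →ₗ[ℂ] ℂ} (hτ : ∀ a, 0 ≤ τ (star a * a)) {a b : A}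
    (ha : τ (star a * a) = 0) (hb : τ (star b * b) = 0) : τ (star (a + b) * (a + b)) = 0 := by
  have parallelogram : star (a + b) * (a + b) + star (a - b) * (a - b)
      = (star a * a + star a * a) + (star b * b + star b * b) := by
    simp only [star_add, star_sub]
    noncomm_ring
  have hsum : τ (star (a + b) * (a + b)) + τ (star (a - b) * (a - b)) = 0 := by
    rw [← map_add, parallelogram]
    simp [ha, hb]
  exact ((add_eq_zero_iff_of_nonneg (hτ _) (hτ _)).mp hsum).1

variable [StarModule ℂ A]

def nullSpace (τ : A →ₗ[ℂ] ℂ) (hτ : ∀ a, 0 ≤ τ (star a * a)) : Submodule ℂ A where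
  carrier := {a | τ (star a * a) = 0}
  zero_mem' := by simp
  add_mem' := add_mem_null_of_nonneg hτ
  smul_mem' z a (ha : τ (star a * a) = 0) := show τ (star (z • a) * (z • a)) = 0 by
    rw [star_smul, smul_mul_smul_comm, map_smul, ha, smul_zero]

theorem IsFiniteDimensionalTrace.of_null_imp {τ σ : A →ₗ[ℂ] ℂ}
    (hτ : IsFiniteDimensionalTrace τ) (hσ : ∀ a, 0 ≤ σ (star a * a))
    (hnull : ∀ a, τ (star a * a) = 0 → σ (star a * a) = 0) : IsFiniteDimensionalTrace σ := by
  obtain ⟨S, hS, hfin⟩ := hτ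
  have hle : S ≤ nullSpace σ hσ := fun a ha => hnull a ((hS a).mp ha)
  exact ⟨nullSpace σ hσ, fun _ => Iff.rfl,
    Module.Finite.of_surjective _ (Submodule.factor_surjective hle)⟩

end NullSpace

theorem IsFiniteDimensionalTrace.of_null_iff_and {A : Type*} [Ring A] [StarRing A] [Algebra ℂ A]
    {τ τ₁ τ₂ : A →ₗ[ℂ] ℂ} (h₁ : IsFiniteDimensionalTrace τ₁) (h₂ : IsFiniteDimensionalTrace τ₂)
    (hnull : ∀ a, τ (star a * a) = 0 ↔ τ₁ (star a * a) = 0 ∧ τ₂ (star a * a) = 0) :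
    IsFiniteDimensionalTrace τ := by
  obtain ⟨S₁, hS₁, hfin₁⟩ := h₁
  obtain ⟨S₂, hS₂, hfin₂⟩ := h₂
  exact ⟨S₁ ⊓ S₂, fun a => by rw [Submodule.mem_inf, hS₁, hS₂, hnull],
    Submodule.finite_quotient_inf S₁ S₂⟩

theorem smul_add_smul_apply_eq_zero_iff {A : Type*} [AddCommMonoid A] [Module ℂ A]
    {τ₁ τ₂ : A →ₗ[ℂ] ℂ} {s t : ℂ} (hs : 0 < s) (ht : 0 < t) {x : A}
    (hx₁ : 0 ≤ τ₁ x) (hx₂ : 0 ≤ τ₂ x) : (s • τ₁ + t • τ₂) x = 0 ↔ τ₁ x = 0 ∧ τ₂ x = 0 := by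
  rw [LinearMap.add_apply, LinearMap.smul_apply, LinearMap.smul_apply, smul_eq_mul, smul_eq_mul,
    add_eq_zero_iff_of_nonneg (mul_nonneg hs.le hx₁) (mul_nonneg ht.le hx₂),
    mul_eq_zero, mul_eq_zero, or_iff_right hs.ne', or_iff_right ht.ne']

theorem stmt_0_general {A : Type*} [NormedRing A] [StarRing A]
    [NormedAlgebra ℂ A] [StarModule ℂ A]
    (τ₁ τ₂ : A →ₗ[ℂ] ℂ) (h₁ : IsTracialState τ₁) (h₂ : IsTracialState τ₂)
    (c : ℝ) (hc0 : 0 < c) (hc1 : c < 1) :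
    (IsFiniteDimensionalTrace ((c : ℂ) • τ₁ + ((1 - c : ℝ) : ℂ) • τ₂) →
      IsFiniteDimensionalTrace τ₁ ∧ IsFiniteDimensionalTrace τ₂) ∧
    (IsFiniteDimensionalTrace τ₁ → IsFiniteDimensionalTrace τ₂ →
      IsFiniteDimensionalTrace ((c : ℂ) • τ₁ + ((1 - c : ℝ) : ℂ) • τ₂)) := by
  obtain ⟨-, hpos₁, -⟩ := h₁
  obtain ⟨-, hpos₂, -⟩ := h₂
  have hs : (0 : ℂ) < c := by exact_mod_cast hc0
  have ht : (0 : ℂ) < ((1 - c : ℝ) : ℂ) := by exact_mod_cast sub_pos.mpr hc1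
  have hnull a := smul_add_smul_apply_eq_zero_iff hs ht (hpos₁ a) (hpos₂ a)
  exact ⟨fun h => ⟨h.of_null_imp hpos₁ fun a ha => ((hnull a).mp ha).1,
      h.of_null_imp hpos₂ fun a ha => ((hnull a).mp ha).2⟩,
    fun hfd₁ hfd₂ => hfd₁.of_null_iff_and hfd₂ hnull⟩

/-- The finite dimensional tracial states form a face of the tracial state space. -/
theorem stmt_0 {A : Type*} [NormedRing A] [StarRing A] [CStarRing A]
    [NormedAlgebra ℂ A] [CompleteSpace A] [StarModule ℂ A]
    (τ₁ τ₂ : A →ₗ[ℂ] ℂ) (h₁ : IsTracialState τ₁) (h₂ : IsTracialState τ₂)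
    (c : ℝ) (hc0 : 0 < c) (hc1 : c < 1) :
    (IsFiniteDimensionalTrace ((c : ℂ) • τ₁ + ((1 - c : ℝ) : ℂ) • τ₂) →
      IsFiniteDimensionalTrace τ₁ ∧ IsFiniteDimensionalTrace τ₂) ∧
    (IsFiniteDimensionalTrace τ₁ → IsFiniteDimensionalTrace τ₂ →
      IsFiniteDimensionalTrace ((c : ℂ) • τ₁ + ((1 - c : ℝ) : ℂ) • τ₂)) :=
  stmt_0_general τ₁ τ₂ h₁ h₂ c hc0 hc1
end

section
/- Let A be a separable unital C*-algebra and let 𝒯 be a weak*-closed convex set of tracial states on A that is separating, i.e., ∩_{τ ∈ 𝒯} I_τ = {0}. Then 𝒯 contains a faithful tracial state. -/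
/-! The states in `𝒯` have norm at most `4`, so `𝒯` is weak-* compact, and it is metrizable
because `A` is separable; hence it has a dense sequence `τₙ`. The weak-* sum
`τ = ∑ 2⁻ⁿ⁻¹ τₙ` lies in `𝒯` since `𝒯` is closed and convex. If `τ (a⋆a) = 0`, positivity forces
`τₙ (a⋆a) = 0` for all `n`, hence `σ (a⋆a) = 0` for every `σ ∈ 𝒯` by density, and `a = 0`
because `𝒯` separates. -/

open scoped ComplexOrder
open Filter Topology

theorem Convex.mem_of_hasSum_smul {ι E : Type*} [AddCommGroup E] [Module ℝ E]
    [TopologicalSpace E] [IsTopologicalAddGroup E] [ContinuousSMul ℝ E] {s : Set E}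
    (hs : Convex ℝ s) (hsc : IsClosed s) {w : ι → ℝ} {x : ι → E} {y : E}
    (hw₀ : ∀ i, 0 ≤ w i) (hw₁ : HasSum w 1) (hx : ∀ i, x i ∈ s)
    (hy : HasSum (fun i => w i • x i) y) : y ∈ s := by
  classical
  obtain ⟨i₀⟩ : Nonempty ι := by
    by_contra h
    rw [not_nonempty_iff] at h
    simpa using hw₁.unique hasSum_empty
  -- A partial sum, with the missing weight put on `x i₀`, is a convex combination.
  have hmem : ∀ t : Finset ι, ∑ i ∈ t, w i • x i + (1 - ∑ i ∈ t, w i) • x i₀ ∈ s := by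
    intro t
    have hsum := hs.sum_mem (t := t.insertNone) (w := fun o => o.elim (1 - ∑ i ∈ t, w i) w)
      (z := fun o => o.elim (x i₀) x) ?_ ?_ ?_
    · simpa only [Finset.sum_insertNone, Option.elim, add_comm] using hsum
    · rintro (_ | i) -
      exacts [sub_nonneg.mpr (sum_le_hasSum t (fun i _ => hw₀ i) hw₁), hw₀ i]
    · simp [Finset.sum_insertNone]
    · rintro (_ | i) -
      exacts [hx i₀, hx i]
  have htend : Tendsto (fun t : Finset ι => ∑ i ∈ t, w i • x i + (1 - ∑ i ∈ t, w i) • x i₀)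
      atTop (𝓝 y) := by
    simpa using Tendsto.add hy (((tendsto_const_nhds (x := (1 : ℝ))).sub hw₁).smul_const (x i₀))
  exact hsc.mem_of_tendsto htend (Eventually.of_forall hmem)

theorem StrongDual.norm_le_four_mul_of_nonneg_star_mul_self {A : Type*} [CStarAlgebra A]
    (f : StrongDual ℂ A) (hf : ∀ a, 0 ≤ f (star a * a)) : ‖f‖ ≤ 4 * ‖f 1‖ := by
  let _ : PartialOrder A := CStarAlgebra.spectralOrder A
  have _ : StarOrderedRing A := CStarAlgebra.spectralOrderedRing A
  let g : A →ₚ[ℂ] ℂ := .mk₀ (f : A →ₗ[ℂ] ℂ) fun x hx => by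
    obtain ⟨b, rfl⟩ := CStarAlgebra.nonneg_iff_eq_star_mul_self.mp hx
    exact hf b
  refine f.opNorm_le_bound (by positivity) fun a => ?_
  obtain ⟨y, hy₀, hy_norm, rfl⟩ := CStarAlgebra.exists_sum_four_nonneg a
  calc ‖f (∑ i : Fin 4, Complex.I ^ (i : ℕ) • y i)‖ ≤ ∑ i : Fin 4, ‖f (y i)‖ := by
        rw [map_sum]
        refine (norm_sum_le _ _).trans_eq ?_
        simp
    _ ≤ ∑ _i : Fin 4, ‖f 1‖ * ‖∑ i : Fin 4, Complex.I ^ (i : ℕ) • y i‖ :=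
        Finset.sum_le_sum fun i _ =>
          (g.norm_apply_le_of_nonneg _ (hy₀ i)).trans <|
            mul_le_mul_of_nonneg_left (hy_norm i) (norm_nonneg _)
    _ = 4 * ‖f 1‖ * _ := by simp [mul_assoc]

theorem WeakDual.summable_smul_of_norm_le {𝕜 E ι : Type*} [RCLike 𝕜]
    [SeminormedAddCommGroup E] [NormedSpace 𝕜 E] {w : ι → ℝ} {φ : ι → WeakDual 𝕜 E}
    {C : ℝ} (hw : Summable w) (hφ : ∀ i, ‖toStrongDual (φ i)‖ ≤ C) :
    Summable fun i => w i • φ i := by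
  have : Summable fun i => w i • toStrongDual (φ i) := by
    refine .of_norm_bounded (hw.abs.mul_right C) fun i => ?_
    rw [norm_smul, Real.norm_eq_abs]
    exact mul_le_mul_of_nonneg_left (hφ i) (abs_nonneg _)
  exact this.map (StrongDual.toWeakDual.restrictScalars ℝ) NormedSpace.Dual.toWeakDual_continuous

theorem WeakDual.apply_eq_zero_of_hasSum_smul {E ι : Type*} [SeminormedAddCommGroup E]
    [NormedSpace ℂ E] {w : ι → ℝ} {φ : ι → WeakDual ℂ E} {τ : WeakDual ℂ E}
    (hτ : HasSum (fun i => w i • φ i) τ) (hw : ∀ i, 0 < w i) {x : E} (hφ : ∀ i, 0 ≤ φ i x)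
    (hx : τ x = 0) (i : ι) : φ i x = 0 := by
  have hsum : HasSum (fun i => (w i : ℂ) * φ i x) 0 :=
    hx ▸ hτ.map (topDualPairing ℂ E |>.flip x) (eval_continuous x)
  have hterm := congrFun ((hasSum_zero_iff_of_nonneg fun i => ?_).mp hsum) i
  · simpa [(hw i).ne'] using hterm
  · exact mul_nonneg (by exact_mod_cast (hw i).le) (hφ i)

theorem WeakDual.exists_seq_dense_of_isCompact {𝕜 E : Type*} [NontriviallyNormedField 𝕜]
    [SeminormedAddCommGroup E] [NormedSpace 𝕜 E] [TopologicalSpace.SeparableSpace E]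
    {K : Set (WeakDual 𝕜 E)} (hK : IsCompact K) (hne : K.Nonempty) :
    ∃ u : ℕ → WeakDual 𝕜 E, (∀ n, u n ∈ K) ∧ K ⊆ closure (Set.range u) := by
  have := metrizable_of_isCompact 𝕜 E K hK
  have := isCompact_iff_compactSpace.mp hK
  have := hne.to_subtype
  refine ⟨fun n => TopologicalSpace.denseSeq K n, fun n => (TopologicalSpace.denseSeq K n).2,
    fun σ hσ => ?_⟩
  rw [Set.range_comp']
  exact image_closure_subset_closure_image continuous_subtype_val
    ⟨⟨σ, hσ⟩, TopologicalSpace.denseRange_denseSeq K _, rfl⟩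

/-- If `𝒯` is a weak*-closed convex set of tracial states on a separable unital C*-algebra
which is separating (i.e. `⋂_{τ ∈ 𝒯} I_τ = {0}`), then `𝒯` contains a faithful tracial
state. -/
theorem stmt_6 {A : Type*} [NormedRing A] [StarRing A] [CStarRing A]
    [NormedAlgebra ℂ A] [CompleteSpace A] [StarModule ℂ A] [Nontrivial A]
    [TopologicalSpace.SeparableSpace A]
    (𝒯 : Set (WeakDual ℂ A))
    (h𝒯 : ∀ τ ∈ 𝒯, τ 1 = 1 ∧ (∀ a, 0 ≤ τ (star a * a)) ∧ ∀ a b, τ (a * b) = τ (b * a))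
    (hclosed : IsClosed 𝒯)
    (hconv : ∀ τ₁ ∈ 𝒯, ∀ τ₂ ∈ 𝒯, ∀ c : ℝ, 0 ≤ c → c ≤ 1 →
      (c : ℂ) • τ₁ + ((1 - c : ℝ) : ℂ) • τ₂ ∈ 𝒯)
    (hsep : ∀ a : A, (∀ τ ∈ 𝒯, τ (star a * a) = 0) → a = 0) :
    ∃ τ ∈ 𝒯, ∀ a : A, τ (star a * a) = 0 → a = 0 := by
  have hnorm (σ : WeakDual ℂ A) (hσ : σ ∈ 𝒯) : ‖WeakDual.toStrongDual σ‖ ≤ 4 := by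
    let _ : CStarAlgebra A := {}
    simpa [(h𝒯 σ hσ).1] using StrongDual.norm_le_four_mul_of_nonneg_star_mul_self
      (WeakDual.toStrongDual σ) (h𝒯 σ hσ).2.1
  have hcompact : IsCompact 𝒯 :=
    (WeakDual.isCompact_closedBall (0 : StrongDual ℂ A) 4).of_isClosed_subset hclosed fun σ hσ => by
      simpa using hnorm σ hσ
  obtain ⟨τs, hτs𝒯, hτs⟩ := WeakDual.exists_seq_dense_of_isCompact hcompact
    (Set.nonempty_iff_ne_empty.2 fun h => one_ne_zero (hsep 1 (by simp [h])))
  have hw : HasSum (fun n : ℕ => 1 / 2 / 2 ^ n : ℕ → ℝ) 1 := hasSum_geometric_two' 1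
  have hw₀ (n : ℕ) : (0 : ℝ) < 1 / 2 / 2 ^ n := by positivity
  obtain ⟨τ, hτ⟩ : Summable fun n => (1 / 2 / 2 ^ n : ℝ) • τs n :=
    WeakDual.summable_smul_of_norm_le hw.summable fun n => hnorm _ (hτs𝒯 n)
  -- Convexity is proved inside the application: for a standalone `Convex ℝ 𝒯` Lean picks an
  -- `SMul ℝ` instance for which `ContinuousSMul ℝ (WeakDual ℂ A)` is not found.
  have hτ𝒯 : τ ∈ 𝒯 := by
    refine Convex.mem_of_hasSum_smul (fun σ₁ hσ₁ σ₂ hσ₂ c d hc hd hcd => ?_) hclosed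
      (fun n => (hw₀ n).le) hw hτs𝒯 hτ
    obtain rfl := eq_sub_of_add_eq' hcd
    exact hconv σ₁ hσ₁ σ₂ hσ₂ c hc (by linarith)
  refine ⟨τ, hτ𝒯, fun a ha => hsep a fun σ hσ => ?_⟩
  have hvanish : Set.range τs ⊆ {σ | σ (star a * a) = 0} := Set.range_subset_iff.2 fun n =>
    WeakDual.apply_eq_zero_of_hasSum_smul hτ hw₀ (fun n => (h𝒯 _ (hτs𝒯 n)).2.1 a) ha n
  exact closure_minimal hvanish (isClosed_eq (WeakDual.eval_continuous _) continuous_const)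
    (hτs hσ)
end

section
/- If A is a unital C*-algebra and τ is a tracial state on A that factors through ∏_{n=1}^∞ M_{k(n)}(ℂ) (i.e., τ = τ' ∘ φ for a unital *-homomorphism φ : A → ∏_n M_{k(n)}(ℂ) and a tracial state τ' on the product), then τ lies in the weak* closure of the finite dimensional tracial states on A. -/
open scoped ComplexOrder

/-!
A traceless matrix is a sum of two commutators, however large the matrix: the commutators with
`diag(0, 1, …, m - 1)` are exactly the zero-diagonal matrices, and a traceless diagonal matrix is
`diag(d) - diag(d ∘ σ)` for the cyclic shift `σ` (with `d` the partial sums), which is the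
commutator of `diag(d) P` and `P⁻¹` for the permutation matrix `P` of `σ`. Hence a trace `τ'` on
`∏ₙ M_{k(n)}(ℂ)` only sees the normalized traces: `τ' x = ω (n ↦ tr(xₙ) / k(n))`, where
`ω f = τ' (fₙ • 1)ₙ` is a state on `ℂ^ℕ`. By Hahn–Banach, on finitely many functions such a state
is `ε`-close to a convex combination `∑_{n ∈ t} wₙ evₙ` of point evaluations. The corresponding
trace `∑_{n ∈ t} wₙ trₙ` factors through the finite dimensional algebra `∏_{n ∈ t} M_{k(n)}(ℂ)`,
and so does its pullback along `φ`.
-/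

theorem exists_eq_sub_comp_finRotate {M : Type*} [AddCommGroup M] {m : ℕ} (μ : Fin m → M)
    (hμ : ∑ i, μ i = 0) : ∃ d : Fin m → M, μ = d - d ∘ finRotate m := by
  cases m with
  | zero => exact ⟨0, funext fun i => i.elim0⟩
  | succ m =>
    let μ' : ℕ → M := fun j => if h : j < m + 1 then μ ⟨j, h⟩ else 0
    have hμ' : ∀ i : Fin (m + 1), μ' i = μ i := fun i => dif_pos i.isLt
    have hsum : ∑ j ∈ Finset.range (m + 1), μ' j = 0 := by
      rw [← Fin.sum_univ_eq_sum_range, ← hμ]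
      exact Finset.sum_congr rfl fun i _ => hμ' i
    refine ⟨fun i => -∑ j ∈ Finset.range i, μ' j, funext fun i => ?_⟩
    simp only [Pi.sub_apply, Function.comp_apply, coe_finRotate]
    split_ifs with hi
    · subst hi
      rw [Finset.sum_range_succ, ← Fin.val_last m, hμ'] at hsum
      simp [eq_neg_of_add_eq_zero_right hsum]
    · simp [Finset.sum_range_succ, hμ']

namespace Matrix

theorem exists_commutator_eq_diagonal_sub_comp {n R : Type*} [Fintype n] [DecidableEq n]
    [Ring R] (d : n → R) (σ : Equiv.Perm n) :
    ∃ P Q : Matrix n n R, diagonal (d - d ∘ σ) = P * Q - Q * P := by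
  refine ⟨(diagonal d).submatrix id σ, (1 : Matrix n n R).submatrix σ id, ?_⟩
  ext i j
  simp +contextual [Matrix.mul_apply, diagonal_apply, one_apply, apply_ite]

theorem sub_diagonal_diag_eq_commutator {K n : Type*} [Field K] [Fintype n] [DecidableEq n]
    {d : n → K} (hd : Function.Injective d) (z : Matrix n n K) :
    z - diagonal z.diag = diagonal d * of (fun i j => z i j / (d i - d j)) -
      of (fun i j => z i j / (d i - d j)) * diagonal d := by
  ext i j
  rcases eq_or_ne i j with rfl | hij
  · simp
  · have : d i - d j ≠ 0 := sub_ne_zero.2 (hd.ne hij)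
    simp only [sub_apply, diagonal_apply_ne _ hij, sub_zero, diagonal_mul, mul_diagonal, of_apply]
    field_simp

theorem exists_commutators_of_trace_eq_zero {K : Type*} [Field K] [CharZero K] {m : ℕ}
    (z : Matrix (Fin m) (Fin m) K) (hz : z.trace = 0) :
    ∃ P₁ Q₁ P₂ Q₂ : Matrix (Fin m) (Fin m) K,
      z = (P₁ * Q₁ - Q₁ * P₁) + (P₂ * Q₂ - Q₂ * P₂) := by
  obtain ⟨d, hd⟩ := exists_eq_sub_comp_finRotate z.diag hz
  obtain ⟨P, Q, hPQ⟩ := exists_commutator_eq_diagonal_sub_comp d (finRotate m)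
  have hoff := sub_diagonal_diag_eq_commutator (d := fun i : Fin m => (i : K))
    (Nat.cast_injective.comp Fin.val_injective) z
  rw [← sub_add_cancel z (diagonal z.diag), hoff, hd, hPQ]
  exact ⟨_, _, P, Q, rfl⟩

end Matrix

abbrev MatrixProduct {ι : Type*} (k : ι → ℕ) : Type _ := ∀ i, Matrix (Fin (k i)) (Fin (k i)) ℂ

namespace MatrixProduct

variable {ι : Type*} (k : ι → ℕ)

noncomputable def normalizedTrace (i : ι) : MatrixProduct k →ₗ[ℂ] ℂ :=
  (k i : ℂ)⁻¹ • (Matrix.traceLinearMap (Fin (k i)) ℂ ℂ ∘ₗ LinearMap.proj i)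

def scalars : (ι → ℂ) →⋆ₐ[ℂ] MatrixProduct k where
  toFun f i := algebraMap ℂ _ (f i)
  map_one' := by ext1 i; simp
  map_mul' f g := by ext1 i; simp
  map_zero' := by ext1 i; simp
  map_add' f g := by ext1 i; simp
  commutes' r := rfl
  map_star' f := funext fun i => algebraMap_star_comm (f i)

variable {k}

@[simp]
lemma normalizedTrace_apply (i : ι) (x : MatrixProduct k) :
    normalizedTrace k i x = (k i : ℂ)⁻¹ * (x i).trace := rfl

@[simp]
lemma scalars_apply (f : ι → ℂ) (i : ι) : scalars k f i = algebraMap ℂ _ (f i) := rfl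

lemma normalizedTrace_one {i : ι} (hk : 0 < k i) : normalizedTrace k i 1 = 1 := by
  have : (k i : ℂ) ≠ 0 := by exact_mod_cast hk.ne'
  simp [this]

lemma normalizedTrace_mul_comm (i : ι) (x y : MatrixProduct k) :
    normalizedTrace k i (x * y) = normalizedTrace k i (y * x) := by
  simp [Matrix.trace_mul_comm (x i)]

lemma normalizedTrace_star_mul_self_nonneg (i : ι) (x : MatrixProduct k) :
    0 ≤ normalizedTrace k i (star x * x) := by
  simp only [normalizedTrace_apply]
  exact mul_nonneg (by positivity) (Matrix.posSemidef_conjTranspose_mul_self (x i)).trace_nonneg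

lemma normalizedTrace_star_mul_self_eq_zero_iff {i : ι} (hk : 0 < k i) (x : MatrixProduct k) :
    normalizedTrace k i (star x * x) = 0 ↔ x i = 0 := by
  have : (k i : ℂ) ≠ 0 := by exact_mod_cast hk.ne'
  simp [this, Matrix.star_eq_conjTranspose, Matrix.trace_conjTranspose_mul_self_eq_zero_iff]

lemma map_eq_zero_of_trace_eq_zero {T : MatrixProduct k →ₗ[ℂ] ℂ}
    (hT : ∀ x y, T (x * y) = T (y * x)) {z : MatrixProduct k} (hz : ∀ i, (z i).trace = 0) :
    T z = 0 := by
  choose P₁ Q₁ P₂ Q₂ hPQ using fun i => Matrix.exists_commutators_of_trace_eq_zero (z i) (hz i)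
  rw [show z = (P₁ * Q₁ - Q₁ * P₁) + (P₂ * Q₂ - Q₂ * P₂) from funext hPQ]
  simp only [map_add, map_sub, hT P₁, hT P₂, sub_self, add_zero]

lemma map_eq_map_scalars_normalizedTrace (hk : ∀ i, 0 < k i) {T : MatrixProduct k →ₗ[ℂ] ℂ}
    (hT : ∀ x y, T (x * y) = T (y * x)) (x : MatrixProduct k) :
    T x = T (scalars k fun i => normalizedTrace k i x) := by
  rw [← sub_eq_zero, ← map_sub]
  refine map_eq_zero_of_trace_eq_zero hT fun i => ?_
  have : (k i : ℂ) ≠ 0 := by exact_mod_cast (hk i).ne'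
  simp only [normalizedTrace_apply, Pi.sub_apply, scalars_apply, Algebra.algebraMap_eq_smul_one,
    Matrix.trace_sub, Matrix.trace_smul, Matrix.trace_one, Fintype.card_fin, smul_eq_mul]
  rw [mul_right_comm, inv_mul_cancel₀ this, one_mul, sub_self]

lemma isTracialState_sum_smul_normalizedTrace (hk : ∀ i, 0 < k i) {t : Finset ι} {w : ι → ℝ}
    (hw₀ : ∀ i ∈ t, 0 ≤ w i) (hw₁ : ∑ i ∈ t, w i = 1) :
    IsTracialState (∑ i ∈ t, (w i : ℂ) • normalizedTrace k i) := by
  refine ⟨?_, fun x => ?_, fun x y => ?_⟩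
  · simp only [LinearMap.sum_apply, LinearMap.smul_apply, normalizedTrace_one (hk _), smul_eq_mul,
      mul_one]
    exact_mod_cast hw₁
  · simp only [LinearMap.sum_apply, LinearMap.smul_apply, smul_eq_mul]
    exact Finset.sum_nonneg fun i hi =>
      mul_nonneg (Complex.zero_le_real.2 (hw₀ i hi)) (normalizedTrace_star_mul_self_nonneg i x)
  · simp only [LinearMap.sum_apply, LinearMap.smul_apply, normalizedTrace_mul_comm _ x y]

lemma isFiniteDimensionalTrace_sum_smul_normalizedTrace (hk : ∀ i, 0 < k i) {t : Finset ι}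
    {w : ι → ℝ} (hw : ∀ i ∈ t, 0 < w i) :
    IsFiniteDimensionalTrace (∑ i ∈ t, (w i : ℂ) • normalizedTrace k i) := by
  let L : MatrixProduct k →ₗ[ℂ] ∀ i : t, Matrix (Fin (k i)) (Fin (k i)) ℂ :=
    LinearMap.pi fun i => LinearMap.proj (i : ι)
  refine ⟨LinearMap.ker L, fun x => ?_, Module.Finite.equiv (LinearMap.quotKerEquivRange L).symm⟩
  have hterm : ∀ i ∈ t, 0 ≤ (w i : ℂ) * normalizedTrace k i (star x * x) := fun i hi =>
    mul_nonneg (Complex.zero_le_real.2 (hw i hi).le) (normalizedTrace_star_mul_self_nonneg i x)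
  simp only [LinearMap.sum_apply, LinearMap.smul_apply, smul_eq_mul,
    Finset.sum_eq_zero_iff_of_nonneg hterm, LinearMap.mem_ker, funext_iff, Subtype.forall]
  refine forall₂_congr fun i hi => ?_
  rw [mul_eq_zero, or_iff_right (Complex.ofReal_ne_zero.2 (hw i hi).ne'),
    normalizedTrace_star_mul_self_eq_zero_iff (hk i)]
  rfl

end MatrixProduct

section Pullback

variable {A B : Type*} [Ring A] [StarRing A] [Algebra ℂ A] [Ring B] [StarRing B] [Algebra ℂ B]
  {τ : B →ₗ[ℂ] ℂ}

lemma IsTracialState.comp (hτ : IsTracialState τ) (φ : A →⋆ₐ[ℂ] B) :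
    IsTracialState (τ ∘ₗ φ.toLinearMap) := by
  refine ⟨?_, fun a => ?_, fun a b => ?_⟩ <;>
    simp only [LinearMap.comp_apply, AlgHom.toLinearMap_apply, StarAlgHom.coe_toAlgHom, map_one,
      map_mul, map_star]
  exacts [hτ.1, hτ.2.1 _, hτ.2.2 _ _]

lemma IsFiniteDimensionalTrace.comp (hτ : IsFiniteDimensionalTrace τ) (φ : A →⋆ₐ[ℂ] B) :
    IsFiniteDimensionalTrace (τ ∘ₗ φ.toLinearMap) := by
  obtain ⟨N, hN, _⟩ := hτ
  let q : A →ₗ[ℂ] B ⧸ N := N.mkQ ∘ₗ φ.toLinearMap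
  have hq : LinearMap.ker q = N.comap φ.toLinearMap := by
    rw [LinearMap.ker_comp, Submodule.ker_mkQ]
  refine ⟨N.comap φ.toLinearMap, fun a => ?_, ?_⟩
  · simp [hN, map_star]
  · rw [← hq]
    exact Module.Finite.equiv (LinearMap.quotKerEquivRange q).symm

end Pullback

namespace LinearMap

theorem map_pi_comm {R S ι : Type*} [CommSemiring R] [Fintype S]
    (F : (S → R) →ₗ[R] R) (ω : (ι → R) →ₗ[R] R) (g : S → ι → R) :
    F (fun a => ω (g a)) = ω (fun i => F (fun a => g a i)) := by
  classical
  have hsum : (fun i => F (fun a => g a i)) =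
      ∑ a, F (fun b => if a = b then 1 else 0) • g a := by
    ext i
    simp [F.pi_apply_eq_sum_univ (fun a => g a i), Finset.sum_apply, mul_comm]
  rw [hsum, F.pi_apply_eq_sum_univ, map_sum]
  simp [mul_comm]

variable {ι : Type*} {ω : (ι → ℂ) →ₗ[ℂ] ℂ}

lemma map_nonneg_of_star_mul_self_nonneg (hω : ∀ s, 0 ≤ ω (star s * s)) {f : ι → ℂ}
    (hf : 0 ≤ f) : 0 ≤ ω f := by
  convert hω fun i => ((f i).re.sqrt : ℂ)
  ext i
  have hre : 0 ≤ (f i).re := (Complex.nonneg_iff.1 (hf i)).1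
  simpa [← Complex.ofReal_mul, Real.mul_self_sqrt hre] using
    Complex.eq_re_of_ofReal_le (r := 0) (by simpa using hf i)

lemma im_map_ofReal_eq_zero (hω : ∀ s, 0 ≤ ω (star s * s)) (r : ι → ℝ) :
    (ω fun i => (r i : ℂ)).im = 0 := by
  have hpos (f : ι → ℝ) (hf : 0 ≤ f) : (ω fun i => (f i : ℂ)).im = 0 :=
    (Complex.nonneg_iff.1 <| map_nonneg_of_star_mul_self_nonneg hω fun i =>
      Complex.zero_le_real.2 (hf i)).2.symm
  have hr : (fun i => (r i : ℂ)) =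
      (fun i => ((max (r i) 0 : ℝ) : ℂ)) - fun i => ((max (-r i) 0 : ℝ) : ℂ) := by
    ext i
    simp [← Complex.ofReal_sub, max_zero_sub_max_neg_zero_eq_self]
  rw [hr, map_sub, Complex.sub_im, hpos (fun i => max (r i) 0) fun i => le_max_right _ _,
    hpos (fun i => max (-r i) 0) fun i => le_max_right _ _, sub_zero]

lemma map_ofReal_re (hω : ∀ s, 0 ≤ ω (star s * s)) (g : ι → ℂ) :
    ω (fun i => ((g i).re : ℂ)) = (ω g).re := by
  have hg : g = (fun i => ((g i).re : ℂ)) + Complex.I • fun i => ((g i).im : ℂ) := by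
    ext i
    simp only [Pi.add_apply, Pi.smul_apply, smul_eq_mul]
    rw [mul_comm, Complex.re_add_im]
  conv_rhs => rw [hg]
  apply Complex.ext <;> simp [im_map_ofReal_eq_zero hω]

end LinearMap

section StatesOnFunctions

variable {ι : Type*} {ω : (ι → ℂ) →ₗ[ℂ] ℂ}

theorem mem_closure_convexHull_range_eval (hω₁ : ω 1 = 1) (hω : ∀ s, 0 ≤ ω (star s * s))
    {S : Type*} [Fintype S] (g : S → ι → ℂ) :
    (fun a => ω (g a)) ∈ closure (convexHull ℝ (Set.range fun i a => g a i)) := by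
  by_contra hp
  obtain ⟨f, u, hfu, hup⟩ :=
    geometric_hahn_banach_closed_point (convex_convexHull ℝ _).closure isClosed_closure hp
  let F : (S → ℂ) →ₗ[ℂ] ℂ := Module.Dual.extendRCLike (f : (S → ℂ) →ₗ[ℝ] ℝ)
  have hF (x : S → ℂ) : (F x).re = f x :=
    Module.Dual.re_extendRCLike_apply (𝕜 := ℂ) (f : (S → ℂ) →ₗ[ℝ] ℝ) x
  have hlt (i : ι) : (F fun a => g a i).re < u := by
    simpa [hF] using hfu _ (subset_closure (subset_convexHull ℝ _ ⟨i, rfl⟩))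
  have hFp : ω (fun i => ((F fun a => g a i).re : ℂ)) = f fun a => ω (g a) := by
    rw [LinearMap.map_ofReal_re hω, ← LinearMap.map_pi_comm, hF]
  -- `i ↦ u - Re F(g · i)` is nonnegative, yet `ω` maps it to `u - f (ω ∘ g) < 0`.
  have hnonneg : 0 ≤ ω ((u : ℂ) • 1 - fun i => ((F fun a => g a i).re : ℂ)) :=
    LinearMap.map_nonneg_of_star_mul_self_nonneg hω fun i => by
      simpa [← Complex.ofReal_sub, Complex.zero_le_real] using (hlt i).le
  rw [map_sub, map_smul, hω₁, hFp, smul_eq_mul, mul_one, ← Complex.ofReal_sub,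
    Complex.zero_le_real] at hnonneg
  linarith

theorem exists_convexCombination_eval_near (hω₁ : ω 1 = 1)
    (hω : ∀ s, 0 ≤ ω (star s * s)) {S : Type*} [Fintype S] (g : S → ι → ℂ) {ε : ℝ}
    (hε : 0 < ε) :
    ∃ (t : Finset ι) (w : ι → ℝ), (∀ i ∈ t, 0 < w i) ∧ ∑ i ∈ t, w i = 1 ∧
      ∀ a, dist (ω (g a)) (∑ i ∈ t, w i * g a i) < ε := by
  classical
  obtain ⟨q, hq, hdist⟩ :=
    Metric.mem_closure_iff.1 (mem_closure_convexHull_range_eval hω₁ hω g) ε hε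
  rw [convexHull_range_eq_exists_affineCombination] at hq
  obtain ⟨t, w, hw₀, hw₁, rfl⟩ := hq
  refine ⟨t.filter (w · ≠ 0), w, fun i hi => ?_, by rwa [Finset.sum_filter_ne_zero], fun a => ?_⟩
  · obtain ⟨hit, hwi⟩ := Finset.mem_filter.1 hi
    exact (hw₀ i hit).lt_of_ne' hwi
  · rw [Finset.sum_filter_of_ne fun i _ hi => by exact_mod_cast left_ne_zero_of_mul hi]
    simpa [t.affineCombination_eq_linear_combination _ _ hw₁, Finset.sum_apply] using
      (dist_le_pi_dist _ _ a).trans_lt hdist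

end StatesOnFunctions

/-- If a tracial state `τ` on a unital C*-algebra `A` factors through `∏ₙ M_{k(n)}(ℂ)`
(as `τ = τ' ∘ φ` for a unital *-homomorphism `φ` and a tracial state `τ'`), then `τ` lies in
the weak* closure of the finite dimensional tracial states on `A`. -/
theorem stmt_11 {A : Type*} [CStarAlgebra A]
    (k : ℕ → ℕ) (hk : ∀ n, 0 < k n)
    (φ : A →⋆ₐ[ℂ] ((n : ℕ) → Matrix (Fin (k n)) (Fin (k n)) ℂ))
    (τ' : ((n : ℕ) → Matrix (Fin (k n)) (Fin (k n)) ℂ) →ₗ[ℂ] ℂ)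
    (hτ' : IsTracialState τ')
    (τ : A →ₗ[ℂ] ℂ) (hτfac : ∀ a, τ a = τ' (φ a))
    (S : Finset A) (ε : ℝ) (hε : 0 < ε) :
    ∃ σ : A →ₗ[ℂ] ℂ, IsTracialState σ ∧ IsFiniteDimensionalTrace σ ∧
      ∀ a ∈ S, dist (τ a) (σ a) < ε := by
  open MatrixProduct in
  have hω := hτ'.comp (scalars k)
  obtain ⟨t, w, hw₀, hw₁, hnear⟩ := exists_convexCombination_eval_near hω.1 hω.2.1
    (fun (a : S) n => normalizedTrace k n (φ a)) hε
  refine ⟨(∑ n ∈ t, (w n : ℂ) • normalizedTrace k n) ∘ₗ φ.toLinearMap,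
    (isTracialState_sum_smul_normalizedTrace hk (fun n hn => (hw₀ n hn).le) hw₁).comp φ,
    (isFiniteDimensionalTrace_sum_smul_normalizedTrace hk hw₀).comp φ, fun a ha => ?_⟩
  rw [hτfac, map_eq_map_scalars_normalizedTrace hk hτ'.2.2]
  simpa using hnear ⟨a, ha⟩
end
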